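/- Assume additionally (iii): z(xy) = ⟦z,x⟧y + (−1)^{|z||x|} x⟦z,y⟧ + (−1)^{|z|(|x|+|y|)}(xy)z for all parity-homogeneous z ∈ g, x ∈ G_{±1}, y ∈ G_{∓1} (an identity in U₀). Then the collection U₋₁, U₀, U₁, with the given products and with the algebra product on U₀ × U₀, is a focally associative local superalgebra; that is, the 13 identities (u₀v₀)w₀=u₀(v₀w₀), (u_{±1}v₀)w₀=u_{±1}(v₀w₀), (u₀v₀)w_{±1}=u₀(v₀w_{±1}), (u₀v_{±1})w₀=u₀(v_{±1}w₀), (u₀v_{±1})w_{∓1}=u₀(v_{±1}w_{∓1}), (u_{±1}v_{∓1})w₀=u_{±1}(v_{∓1}w₀), (u_{±1}v₀)w_{∓1}=u_{±1}(v₀w_{∓1}) hold for all elements (subscripts denote degrees, i.e. membership in U₀ or U_{±1}). -/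

import Mathlib

open scoped TensorProduct

/-- The right action of `U₀` on `U_{±1} = G ⊗ U₀`, determined by bilinearity and the
rule `(x ⊗ u)v = x ⊗ (uv)`. -/
noncomputable def rmul {K U0 G : Type*} [Field K] [Ring U0] [Algebra K U0]
    [AddCommGroup G] [Module K G] (z : G ⊗[K] U0) (v : U0) : G ⊗[K] U0 :=
  TensorProduct.map LinearMap.id (LinearMap.mulRight K v) z

/-- The total-parity components of `U_{±1} = G ⊗ U₀`: the parity-`s` component is spanned by
the tensors `x ⊗ u` with `x` of parity `p` in `G`, `u` of parity `t` in `U₀` and `p + t = s`. -/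
def tpar {K U0 G : Type*} [Field K] [Ring U0] [Algebra K U0]
    [AddCommGroup G] [Module K G] (q : ZMod 2 → Submodule K G)
    (p0 : ZMod 2 → Submodule K U0) (s : ZMod 2) : Submodule K (G ⊗[K] U0) :=
  Submodule.span K {z | ∃ p t, p + t = s ∧ ∃ x ∈ q p, ∃ u ∈ p0 t, z = x ⊗ₜ[K] u}

section

variable (K : Type*) [Field K] [CharZero K]
  -- (a) a unital associative `ℤ/2ℤ`-graded `K`-algebra `U₀`,
  (U0 : Type*) [Ring U0] [Algebra K U0]
  (p0 : ZMod 2 → Submodule K U0) [GradedAlgebra p0]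
  -- generated as a unital algebra by a graded subspace `g ⊆ U₀`,
  (g : Submodule K U0)
  -- (b) `ℤ/2ℤ`-graded `K`-vector spaces `G₁` and `G₋₁`; `U₁ := G₁ ⊗ U₀`, `U₋₁ := G₋₁ ⊗ U₀`,
  (G1 Gm : Type*) [AddCommGroup G1] [Module K G1] [AddCommGroup Gm] [Module K Gm]
  (q1 : ZMod 2 → Submodule K G1) (qm : ZMod 2 → Submodule K Gm)
  [DirectSum.Decomposition q1] [DirectSum.Decomposition qm]
  -- (c) the products `U₁ × U₋₁ → U₀`, `U₋₁ × U₁ → U₀`, `U₀ × U_{±1} → U_{±1}`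
  --     (the products `U_{±1} × U₀ → U_{±1}` are given by `rmul`),
  (mpm : G1 ⊗[K] U0 →ₗ[K] Gm ⊗[K] U0 →ₗ[K] U0)
  (mmp : Gm ⊗[K] U0 →ₗ[K] G1 ⊗[K] U0 →ₗ[K] U0)
  (a0p : U0 →ₗ[K] G1 ⊗[K] U0 →ₗ[K] G1 ⊗[K] U0)
  (a0m : U0 →ₗ[K] Gm ⊗[K] U0 →ₗ[K] Gm ⊗[K] U0)
  -- (d) parity-preserving brackets `⟦−,−⟧ : g × G_{±1} → G_{±1}`
  (b1 : g →ₗ[K] G1 →ₗ[K] G1)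
  (bm : g →ₗ[K] Gm →ₗ[K] Gm)

/-- hypotheses of the context: `g` is a graded subspace generating `U₀`; the products and
brackets are parity-preserving; `1 ∈ U₀` acts as the identity on `U_{±1}`;
assumptions (i) and (ii). -/
structure ContextHyps : Prop where
  g_graded : ∀ x ∈ g, ∀ p : ZMod 2, (DirectSum.decompose p0 x p : U0) ∈ g
  g_gen : Algebra.adjoin K (g : Set U0) = ⊤
  mpm_par : ∀ (s t : ZMod 2) (z : G1 ⊗[K] U0) (w : Gm ⊗[K] U0),
    z ∈ tpar q1 p0 s → w ∈ tpar qm p0 t → mpm z w ∈ p0 (s + t)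
  mmp_par : ∀ (s t : ZMod 2) (z : Gm ⊗[K] U0) (w : G1 ⊗[K] U0),
    z ∈ tpar qm p0 s → w ∈ tpar q1 p0 t → mmp z w ∈ p0 (s + t)
  a0p_par : ∀ (s t : ZMod 2) (u : U0) (z : G1 ⊗[K] U0),
    u ∈ p0 s → z ∈ tpar q1 p0 t → a0p u z ∈ tpar q1 p0 (s + t)
  a0m_par : ∀ (s t : ZMod 2) (u : U0) (z : Gm ⊗[K] U0),
    u ∈ p0 s → z ∈ tpar qm p0 t → a0m u z ∈ tpar qm p0 (s + t)
  a0p_one : ∀ z : G1 ⊗[K] U0, a0p 1 z = z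
  a0m_one : ∀ z : Gm ⊗[K] U0, a0m 1 z = z
  b1_par : ∀ (t p : ZMod 2) (z : g) (x : G1),
    (z : U0) ∈ p0 t → x ∈ q1 p → b1 z x ∈ q1 (t + p)
  bm_par : ∀ (t p : ZMod 2) (z : g) (x : Gm),
    (z : U0) ∈ p0 t → x ∈ qm p → bm z x ∈ qm (t + p)
  -- assumption (i): `x(y ⊗ v) = (xy)v`
  i_pm : ∀ (x : G1) (y : Gm) (v : U0),
    mpm (x ⊗ₜ[K] 1) (y ⊗ₜ[K] v) = mpm (x ⊗ₜ[K] 1) (y ⊗ₜ[K] 1) * v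
  i_mp : ∀ (x : Gm) (y : G1) (v : U0),
    mmp (x ⊗ₜ[K] 1) (y ⊗ₜ[K] v) = mmp (x ⊗ₜ[K] 1) (y ⊗ₜ[K] 1) * v
  -- assumption (ii):
  -- `(x ⊗ (uz))(y ⊗ v) = (x ⊗ u)(⟦z,y⟧ ⊗ v) + (−1)^{|y||z|}(x ⊗ u)(y ⊗ (zv))`
  ii_pm : ∀ (t s : ZMod 2) (z : g), (z : U0) ∈ p0 t → ∀ y : Gm, y ∈ qm s →
    ∀ (x : G1) (u v : U0),
    mpm (x ⊗ₜ[K] (u * (z : U0))) (y ⊗ₜ[K] v)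
      = mpm (x ⊗ₜ[K] u) (bm z y ⊗ₜ[K] v)
        + ((-1 : K) ^ (s * t).val) • mpm (x ⊗ₜ[K] u) (y ⊗ₜ[K] ((z : U0) * v))
  ii_mp : ∀ (t s : ZMod 2) (z : g), (z : U0) ∈ p0 t → ∀ y : G1, y ∈ q1 s →
    ∀ (x : Gm) (u v : U0),
    mmp (x ⊗ₜ[K] (u * (z : U0))) (y ⊗ₜ[K] v)
      = mmp (x ⊗ₜ[K] u) (b1 z y ⊗ₜ[K] v)
        + ((-1 : K) ^ (s * t).val) • mmp (x ⊗ₜ[K] u) (y ⊗ₜ[K] ((z : U0) * v))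
  ii_0p : ∀ (t s : ZMod 2) (z : g), (z : U0) ∈ p0 t → ∀ y : G1, y ∈ q1 s →
    ∀ u v : U0,
    a0p (u * (z : U0)) (y ⊗ₜ[K] v)
      = a0p u (b1 z y ⊗ₜ[K] v)
        + ((-1 : K) ^ (s * t).val) • a0p u (y ⊗ₜ[K] ((z : U0) * v))
  ii_0m : ∀ (t s : ZMod 2) (z : g), (z : U0) ∈ p0 t → ∀ y : Gm, y ∈ qm s →
    ∀ u v : U0,
    a0m (u * (z : U0)) (y ⊗ₜ[K] v)
      = a0m u (bm z y ⊗ₜ[K] v)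
        + ((-1 : K) ^ (s * t).val) • a0m u (y ⊗ₜ[K] ((z : U0) * v))

end

/-!
All products are bilinear, so each identity only has to be checked on pure tensors `x ⊗ u` with
`x` homogeneous. Since `U₀` is generated by the homogeneous elements of `g`, an identity that is
linear in an argument `u ∈ U₀` follows from its case `u = 1` together with its stability under
`u ↦ u z` for homogeneous `z ∈ g`. In that step, (ii) moves `z` across the product, reducing the
identity for `u z` to the one for `u`. The cases `u = 1` follow from `1` acting trivially and
from (i), except for `(u₀v_{±1})w_{∓1} = u₀(v_{±1}w_{∓1})`: there `z` must be moved past the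
generator `x` of `v_{±1}`, and this is what (iii) provides.
-/

open TensorProduct

theorem ZMod.neg_one_pow_val_add {R : Type*} [Ring R] (a b : ZMod 2) :
    (-1 : R) ^ (a + b).val = (-1) ^ a.val * (-1) ^ b.val := by
  rw [ZMod.val_add, ← neg_one_pow_eq_pow_mod_two, pow_add]

section RightMul

variable {K U0 G : Type*} [Field K] [Ring U0] [Algebra K U0] [AddCommGroup G] [Module K G]

@[simp]
theorem rmul_tmul (x : G) (u v : U0) : rmul (x ⊗ₜ[K] u) v = x ⊗ₜ[K] (u * v) := rfl

@[simp]
theorem rmul_one (z : G ⊗[K] U0) : rmul z 1 = z := by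
  simp [rmul]

@[simp]
theorem rmul_zero_left (v : U0) : rmul (0 : G ⊗[K] U0) v = 0 := map_zero _

@[simp]
theorem rmul_add_left (z z' : G ⊗[K] U0) (v : U0) :
    rmul (z + z') v = rmul z v + rmul z' v := map_add _ _ _

@[simp]
theorem rmul_smul_left (c : K) (z : G ⊗[K] U0) (v : U0) :
    rmul (c • z) v = c • rmul z v := map_smul _ _ _

@[simp]
theorem rmul_add_right (z : G ⊗[K] U0) (v w : U0) :
    rmul z (v + w) = rmul z v + rmul z w := by
  induction z using TensorProduct.induction_on with
  | zero => simp
  | tmul x u => simp [mul_add, tmul_add]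
  | add z z' hz hz' => simp only [rmul_add_left, hz, hz']; abel

@[simp]
theorem rmul_smul_right (z : G ⊗[K] U0) (c : K) (v : U0) :
    rmul z (c • v) = c • rmul z v := by
  induction z using TensorProduct.induction_on with
  | zero => simp
  | tmul x u => simp [tmul_smul]
  | add z z' hz hz' => simp [hz, hz']

theorem rmul_rmul (z : G ⊗[K] U0) (v w : U0) : rmul (rmul z v) w = rmul z (v * w) := by
  simp [rmul, ← LinearMap.comp_apply, ← TensorProduct.map_comp]

end RightMul

section Induction

theorem TensorProduct.induction_on_homogeneous_tmul {R M N ι : Type*} [CommSemiring R]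
    [AddCommMonoid M] [Module R M] [AddCommMonoid N] [Module R N] [DecidableEq ι]
    (q : ι → Submodule R M) [DirectSum.Decomposition q] {P : M ⊗[R] N → Prop} (zero : P 0)
    (add : ∀ w w', P w → P w' → P (w + w'))
    (tmul : ∀ (s : ι) (y : M), y ∈ q s → ∀ v : N, P (y ⊗ₜ v)) (w : M ⊗[R] N) : P w := by
  induction w using TensorProduct.induction_on with
  | zero => exact zero
  | add w w' hw hw' => exact add w w' hw hw'
  | tmul y v =>
    induction y using DirectSum.Decomposition.inductionOn q with
    | zero => simpa using zero
    | homogeneous y => exact tmul _ y y.2 v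
    | add y y' hy hy' => simpa [TensorProduct.add_tmul] using add _ _ hy hy'

theorem induction_on_mul_homogeneous {R A ι : Type*} [CommSemiring R] [Semiring A]
    [Algebra R A] [DecidableEq ι] [AddMonoid ι] (p0 : ι → Submodule R A) [GradedAlgebra p0]
    {g : Submodule R A} (hg : ∀ x ∈ g, ∀ i, (DirectSum.decompose p0 x i : A) ∈ g)
    (hgen : Algebra.adjoin R (g : Set A) = ⊤) {P : A → Prop} (one : P 1)
    (add : ∀ u v, P u → P v → P (u + v)) (smul : ∀ (c : R) u, P u → P (c • u))
    (mul : ∀ (i : ι) (z : g), (z : A) ∈ p0 i → ∀ u, P u → P (u * z)) (u : A) : P u := by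
  have zero : P 0 := by simpa using smul 0 1 one
  have key : ∀ c ∈ Algebra.adjoin R (g : Set A), ∀ u, P u → P (u * c) := by
    intro c hc
    induction hc using Algebra.adjoin_induction with
    | mem c hc =>
      classical
      intro u hu
      rw [← DirectSum.sum_support_decompose p0 c, Finset.mul_sum]
      exact Finset.sum_induction _ P add zero fun i _ =>
        mul i ⟨_, hg c hc i⟩ (SetLike.coe_mem _) u hu
    | algebraMap r =>
      intro u hu
      rw [← Algebra.commutes, ← Algebra.smul_def]
      exact smul r u hu
    | add c c' _ _ hc hc' => intro u hu; rw [mul_add]; exact add _ _ (hc u hu) (hc' u hu)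
    | mul c c' _ _ hc hc' => intro u hu; rw [← mul_assoc]; exact hc' _ (hc u hu)
  simpa using key u (hgen ▸ Algebra.mem_top) 1 one

end Induction

section Action

variable {K U0 G : Type*} [Field K] [Ring U0] [Algebra K U0] [AddCommGroup G] [Module K G]
  (p0 : ZMod 2 → Submodule K U0) {g : Submodule K U0} (q : ZMod 2 → Submodule K G)

/-- Assumption (ii) for a left action `a` of `U₀` on `G ⊗ U₀`. -/
def ActionLeibniz (b : g →ₗ[K] G →ₗ[K] G) (a : U0 →ₗ[K] G ⊗[K] U0 →ₗ[K] G ⊗[K] U0) : Prop :=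
  ∀ (t s : ZMod 2) (z : g), (z : U0) ∈ p0 t → ∀ y : G, y ∈ q s → ∀ u v : U0,
    a (u * (z : U0)) (y ⊗ₜ[K] v)
      = a u (b z y ⊗ₜ[K] v) + ((-1 : K) ^ (s * t).val) • a u (y ⊗ₜ[K] ((z : U0) * v))

variable {p0 q} {b : g →ₗ[K] G →ₗ[K] G} {a : U0 →ₗ[K] G ⊗[K] U0 →ₗ[K] G ⊗[K] U0}

theorem act_homogeneous_tmul (ha1 : ∀ w, a 1 w = w) (hii : ActionLeibniz p0 q b a)
    {t s : ZMod 2} (z : g) (hz : (z : U0) ∈ p0 t) {y : G} (hy : y ∈ q s) (v : U0) :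
    a z (y ⊗ₜ[K] v) = b z y ⊗ₜ[K] v + ((-1 : K) ^ (s * t).val) • y ⊗ₜ[K] ((z : U0) * v) := by
  simpa [ha1] using hii t s z hz y hy 1 v

variable [DirectSum.Decomposition q]

theorem act_mul_homogeneous (ha1 : ∀ w, a 1 w = w) (hii : ActionLeibniz p0 q b a)
    {t : ZMod 2} (z : g) (hz : (z : U0) ∈ p0 t) (u : U0) (w : G ⊗[K] U0) :
    a (u * z) w = a u (a z w) := by
  induction w using TensorProduct.induction_on_homogeneous_tmul q with
  | zero => simp
  | add w w' hw hw' => simp [hw, hw']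
  | tmul s y hy v =>
    rw [hii t s z hz y hy, act_homogeneous_tmul ha1 hii z hz hy, map_add, map_smul]

variable [GradedAlgebra p0]

theorem act_mul (hg : ∀ x ∈ g, ∀ i, (DirectSum.decompose p0 x i : U0) ∈ g)
    (hgen : Algebra.adjoin K (g : Set U0) = ⊤) (ha1 : ∀ w, a 1 w = w)
    (hii : ActionLeibniz p0 q b a) (u v : U0) (w : G ⊗[K] U0) :
    a (u * v) w = a u (a v w) := by
  induction v using induction_on_mul_homogeneous p0 hg hgen generalizing u w with
  | one => simp [ha1]
  | add v v' hv hv' => simp [mul_add, hv, hv']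
  | smul c v hv => simp [hv]
  | mul t z hz v hv =>
    rw [← mul_assoc, act_mul_homogeneous ha1 hii z hz, hv, act_mul_homogeneous ha1 hii z hz]

theorem rmul_act (hg : ∀ x ∈ g, ∀ i, (DirectSum.decompose p0 x i : U0) ∈ g)
    (hgen : Algebra.adjoin K (g : Set U0) = ⊤) (ha1 : ∀ w, a 1 w = w)
    (hii : ActionLeibniz p0 q b a) (u : U0) (v : G ⊗[K] U0) (w : U0) :
    rmul (a u v) w = a u (rmul v w) := by
  have homogeneous : ∀ (t : ZMod 2) (z : g), (z : U0) ∈ p0 t → ∀ v,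
      rmul (a z v) w = a z (rmul v w) := by
    intro t z hz v
    induction v using TensorProduct.induction_on_homogeneous_tmul q with
    | zero => simp
    | add v v' hv hv' => simp [hv, hv']
    | tmul s y hy v =>
      simp [act_homogeneous_tmul ha1 hii z hz hy, mul_assoc]
  induction u using induction_on_mul_homogeneous p0 hg hgen generalizing v with
  | one => simp [ha1]
  | add u u' hu hu' => simp [hu, hu']
  | smul c u hu => simp [hu]
  | mul t z hz u hu =>
    rw [act_mul hg hgen ha1 hii, hu, homogeneous t z hz, ← act_mul hg hgen ha1 hii]

end Action

section Pairing

variable {K U0 G G' : Type*} [Field K] [Ring U0] [Algebra K U0] [AddCommGroup G] [Module K G]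
  [AddCommGroup G'] [Module K G'] (p0 : ZMod 2 → Submodule K U0) {g : Submodule K U0}
  (q : ZMod 2 → Submodule K G) (q' : ZMod 2 → Submodule K G')

/-- Assumption (i) for a pairing `m : (G ⊗ U₀) × (G' ⊗ U₀) → U₀`. -/
def PairingMulRight (m : G ⊗[K] U0 →ₗ[K] G' ⊗[K] U0 →ₗ[K] U0) : Prop :=
  ∀ (x : G) (y : G') (v : U0), m (x ⊗ₜ[K] 1) (y ⊗ₜ[K] v) = m (x ⊗ₜ[K] 1) (y ⊗ₜ[K] 1) * v

/-- Assumption (ii) for a pairing `m : (G ⊗ U₀) × (G' ⊗ U₀) → U₀`. -/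
def PairingLeibniz (b' : g →ₗ[K] G' →ₗ[K] G') (m : G ⊗[K] U0 →ₗ[K] G' ⊗[K] U0 →ₗ[K] U0) :
    Prop :=
  ∀ (t s : ZMod 2) (z : g), (z : U0) ∈ p0 t → ∀ y : G', y ∈ q' s → ∀ (x : G) (u v : U0),
    m (x ⊗ₜ[K] (u * (z : U0))) (y ⊗ₜ[K] v)
      = m (x ⊗ₜ[K] u) (b' z y ⊗ₜ[K] v)
        + ((-1 : K) ^ (s * t).val) • m (x ⊗ₜ[K] u) (y ⊗ₜ[K] ((z : U0) * v))

/-- Assumption (iii) for a pairing `m : (G ⊗ U₀) × (G' ⊗ U₀) → U₀`. -/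
def PairingBracket (b : g →ₗ[K] G →ₗ[K] G) (b' : g →ₗ[K] G' →ₗ[K] G')
    (m : G ⊗[K] U0 →ₗ[K] G' ⊗[K] U0 →ₗ[K] U0) : Prop :=
  ∀ (t sx sy : ZMod 2) (z : g), (z : U0) ∈ p0 t → ∀ x : G, x ∈ q sx → ∀ y : G', y ∈ q' sy →
    (z : U0) * m (x ⊗ₜ[K] 1) (y ⊗ₜ[K] 1)
      = m (b z x ⊗ₜ[K] 1) (y ⊗ₜ[K] 1)
        + ((-1 : K) ^ (t * sx).val) • m (x ⊗ₜ[K] 1) (b' z y ⊗ₜ[K] 1)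
        + ((-1 : K) ^ (t * (sx + sy)).val) • (m (x ⊗ₜ[K] 1) (y ⊗ₜ[K] 1) * (z : U0))

variable {p0 q q'} [DirectSum.Decomposition q'] {b : g →ₗ[K] G →ₗ[K] G}
  {b' : g →ₗ[K] G' →ₗ[K] G'} {m : G ⊗[K] U0 →ₗ[K] G' ⊗[K] U0 →ₗ[K] U0}

theorem homogeneous_mul_pairing_tmul_one (hi : PairingMulRight m)
    (hii : PairingLeibniz p0 q' b' m) (hiii : PairingBracket p0 q q' b b' m)
    {t sx : ZMod 2} (z : g) (hz : (z : U0) ∈ p0 t) {x : G} (hx : x ∈ q sx) (w : G' ⊗[K] U0) :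
    (z : U0) * m (x ⊗ₜ[K] 1) w
      = m (b z x ⊗ₜ[K] 1) w + ((-1 : K) ^ (sx * t).val) • m (x ⊗ₜ[K] (z : U0)) w := by
  induction w using TensorProduct.induction_on_homogeneous_tmul q' with
  | zero => simp
  | add w w' hw hw' => simp only [map_add, mul_add, smul_add, hw, hw']; abel
  | tmul sy y hy v =>
    have hxz := hii t sy z hz y hy x 1 v
    rw [one_mul] at hxz
    have sign : (-1 : K) ^ (t * (sx + sy)).val = (-1) ^ (sx * t).val * (-1) ^ (sy * t).val := by
      rw [mul_add, ZMod.neg_one_pow_val_add, mul_comm t sx, mul_comm t sy]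
    rw [hi x y v, ← mul_assoc, hiii t sx sy z hz x hx y hy, hxz, hi (b z x) y v,
      hi x (b' z y) v, hi x y ((z : U0) * v), sign, mul_comm t sx]
    simp only [add_mul, smul_mul_assoc, mul_assoc, smul_add, smul_smul]
    module

variable [GradedAlgebra p0]

theorem pairing_mul_eq_pairing_rmul (hg : ∀ x ∈ g, ∀ i, (DirectSum.decompose p0 x i : U0) ∈ g)
    (hgen : Algebra.adjoin K (g : Set U0) = ⊤) (hi : PairingMulRight m)
    (hii : PairingLeibniz p0 q' b' m) (u : G ⊗[K] U0) (v : G' ⊗[K] U0) (w : U0) :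
    m u v * w = m u (rmul v w) := by
  induction u using TensorProduct.induction_on with
  | zero => simp
  | add u u' hu hu' => simp [add_mul, hu, hu']
  | tmul x u =>
    induction u using induction_on_mul_homogeneous p0 hg hgen generalizing v w with
    | one =>
      induction v using TensorProduct.induction_on with
      | zero => simp
      | add v v' hv hv' => simp [add_mul, hv, hv']
      | tmul y v => rw [rmul_tmul, hi x y v, hi x y (v * w), mul_assoc]
    | add u u' hu hu' => simp [tmul_add, add_mul, hu, hu']
    | smul c u hu => simp [tmul_smul, hu]
    | mul t z hz u hu =>
      induction v using TensorProduct.induction_on_homogeneous_tmul q' with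
      | zero => simp
      | add v v' hv hv' => simp [add_mul, hv, hv']
      | tmul s y hy v =>
        rw [rmul_tmul, hii t s z hz y hy, hii t s z hz y hy, add_mul, smul_mul_assoc, hu, hu,
          rmul_tmul, rmul_tmul, mul_assoc]

theorem homogeneous_mul_pairing_tmul (hg : ∀ x ∈ g, ∀ i, (DirectSum.decompose p0 x i : U0) ∈ g)
    (hgen : Algebra.adjoin K (g : Set U0) = ⊤) (hi : PairingMulRight m)
    (hii : PairingLeibniz p0 q' b' m) (hiii : PairingBracket p0 q q' b b' m)
    {t sx : ZMod 2} (z : g) (hz : (z : U0) ∈ p0 t) {x : G} (hx : x ∈ q sx) (u : U0)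
    (w : G' ⊗[K] U0) :
    (z : U0) * m (x ⊗ₜ[K] u) w
      = m (b z x ⊗ₜ[K] u) w + ((-1 : K) ^ (sx * t).val) • m (x ⊗ₜ[K] ((z : U0) * u)) w := by
  induction u using induction_on_mul_homogeneous p0 hg hgen generalizing w with
  | one => simpa using homogeneous_mul_pairing_tmul_one hi hii hiii z hz hx w
  | add u u' hu hu' => simp only [tmul_add, mul_add, map_add, LinearMap.add_apply, hu, hu']; module
  | smul c u hu => simp only [tmul_smul, mul_smul_comm, map_smul, LinearMap.smul_apply, hu]; module
  | mul t' z' hz' u hu =>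
    induction w using TensorProduct.induction_on_homogeneous_tmul q' with
    | zero => simp
    | add w w' hw hw' => simp only [map_add, mul_add, smul_add, hw, hw']; abel
    | tmul sy y hy v =>
      rw [← mul_assoc, hii t' sy z' hz' y hy, hii t' sy z' hz' y hy,
        hii t' sy z' hz' y hy, mul_add, mul_smul_comm, hu, hu]
      module

variable {a : U0 →ₗ[K] G ⊗[K] U0 →ₗ[K] G ⊗[K] U0} {a' : U0 →ₗ[K] G' ⊗[K] U0 →ₗ[K] G' ⊗[K] U0}

theorem pairing_act_left [DirectSum.Decomposition q]
    (hg : ∀ x ∈ g, ∀ i, (DirectSum.decompose p0 x i : U0) ∈ g)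
    (hgen : Algebra.adjoin K (g : Set U0) = ⊤) (ha1 : ∀ w, a 1 w = w)
    (hiia : ActionLeibniz p0 q b a) (hi : PairingMulRight m)
    (hii : PairingLeibniz p0 q' b' m) (hiii : PairingBracket p0 q q' b b' m)
    (u : U0) (v : G ⊗[K] U0) (w : G' ⊗[K] U0) :
    m (a u v) w = u * m v w := by
  have homogeneous : ∀ (t : ZMod 2) (z : g), (z : U0) ∈ p0 t → ∀ v,
      m (a z v) w = z * m v w := by
    intro t z hz v
    induction v using TensorProduct.induction_on_homogeneous_tmul q with
    | zero => simp
    | add v v' hv hv' => simp [mul_add, hv, hv']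
    | tmul sx x hx u =>
      rw [act_homogeneous_tmul ha1 hiia z hz hx, map_add, map_smul, LinearMap.add_apply,
        LinearMap.smul_apply, homogeneous_mul_pairing_tmul hg hgen hi hii hiii z hz hx]
  induction u using induction_on_mul_homogeneous p0 hg hgen generalizing v with
  | one => simp [ha1]
  | add u u' hu hu' => simp [add_mul, hu, hu']
  | smul c u hu => simp [hu]
  | mul t z hz u hu => rw [act_mul hg hgen ha1 hiia, hu, homogeneous t z hz, mul_assoc]

theorem pairing_rmul_left (hg : ∀ x ∈ g, ∀ i, (DirectSum.decompose p0 x i : U0) ∈ g)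
    (hgen : Algebra.adjoin K (g : Set U0) = ⊤) (ha1 : ∀ w, a' 1 w = w)
    (hiia : ActionLeibniz p0 q' b' a') (hii : PairingLeibniz p0 q' b' m)
    (u : G ⊗[K] U0) (v : U0) (w : G' ⊗[K] U0) :
    m (rmul u v) w = m u (a' v w) := by
  have homogeneous : ∀ (t : ZMod 2) (z : g), (z : U0) ∈ p0 t → ∀ u w,
      m (rmul u z) w = m u (a' z w) := by
    intro t z hz u w
    induction u using TensorProduct.induction_on with
    | zero => simp
    | add u u' hu hu' => simp [hu, hu']
    | tmul x u =>
      induction w using TensorProduct.induction_on_homogeneous_tmul q' with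
      | zero => simp
      | add w w' hw hw' => simp only [map_add, hw, hw']
      | tmul s y hy v =>
        rw [rmul_tmul, hii t s z hz y hy, act_homogeneous_tmul ha1 hiia z hz hy, map_add,
          map_smul]
  induction v using induction_on_mul_homogeneous p0 hg hgen generalizing u w with
  | one => simp [ha1]
  | add v v' hv hv' => simp [hv, hv']
  | smul c v hv => simp [hv]
  | mul t z hz v hv =>
    rw [← rmul_rmul, homogeneous t z hz, hv, act_mul hg hgen ha1 hiia]

end Pairing

theorem focallyAssociative_of_contextHyps_general
    (K : Type*) [Field K]
    (U0 : Type*) [Ring U0] [Algebra K U0]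
    (p0 : ZMod 2 → Submodule K U0) [GradedAlgebra p0]
    (g : Submodule K U0)
    (G1 Gm : Type*) [AddCommGroup G1] [Module K G1] [AddCommGroup Gm] [Module K Gm]
    (q1 : ZMod 2 → Submodule K G1) (qm : ZMod 2 → Submodule K Gm)
    [DirectSum.Decomposition q1] [DirectSum.Decomposition qm]
    (mpm : G1 ⊗[K] U0 →ₗ[K] Gm ⊗[K] U0 →ₗ[K] U0)
    (mmp : Gm ⊗[K] U0 →ₗ[K] G1 ⊗[K] U0 →ₗ[K] U0)
    (a0p : U0 →ₗ[K] G1 ⊗[K] U0 →ₗ[K] G1 ⊗[K] U0)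
    (a0m : U0 →ₗ[K] Gm ⊗[K] U0 →ₗ[K] Gm ⊗[K] U0)
    (b1 : g →ₗ[K] G1 →ₗ[K] G1)
    (bm : g →ₗ[K] Gm →ₗ[K] Gm)
    (hyp : ContextHyps K U0 p0 g G1 Gm q1 qm mpm mmp a0p a0m b1 bm)
    -- assumption (iii), case x ∈ G₁, y ∈ G₋₁:
    (hiii_pm : ∀ (t sx sy : ZMod 2) (z : g), (z : U0) ∈ p0 t →
      ∀ x : G1, x ∈ q1 sx → ∀ y : Gm, y ∈ qm sy →
      (z : U0) * mpm (x ⊗ₜ[K] 1) (y ⊗ₜ[K] 1)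
        = mpm (b1 z x ⊗ₜ[K] 1) (y ⊗ₜ[K] 1)
          + ((-1 : K) ^ (t * sx).val) • mpm (x ⊗ₜ[K] 1) (bm z y ⊗ₜ[K] 1)
          + ((-1 : K) ^ (t * (sx + sy)).val) • (mpm (x ⊗ₜ[K] 1) (y ⊗ₜ[K] 1) * (z : U0)))
    -- assumption (iii), case x ∈ G₋₁, y ∈ G₁:
    (hiii_mp : ∀ (t sx sy : ZMod 2) (z : g), (z : U0) ∈ p0 t →
      ∀ x : Gm, x ∈ qm sx → ∀ y : G1, y ∈ q1 sy →
      (z : U0) * mmp (x ⊗ₜ[K] 1) (y ⊗ₜ[K] 1)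
        = mmp (bm z x ⊗ₜ[K] 1) (y ⊗ₜ[K] 1)
          + ((-1 : K) ^ (t * sx).val) • mmp (x ⊗ₜ[K] 1) (b1 z y ⊗ₜ[K] 1)
          + ((-1 : K) ^ (t * (sx + sy)).val) • (mmp (x ⊗ₜ[K] 1) (y ⊗ₜ[K] 1) * (z : U0))) :
    -- (u₀v₀)w₀ = u₀(v₀w₀)
    (∀ u v w : U0, (u * v) * w = u * (v * w)) ∧
    -- (u₁v₀)w₀ = u₁(v₀w₀)
    (∀ (u : G1 ⊗[K] U0) (v w : U0), rmul (rmul u v) w = rmul u (v * w)) ∧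
    -- (u₋₁v₀)w₀ = u₋₁(v₀w₀)
    (∀ (u : Gm ⊗[K] U0) (v w : U0), rmul (rmul u v) w = rmul u (v * w)) ∧
    -- (u₀v₀)w₁ = u₀(v₀w₁)
    (∀ (u v : U0) (w : G1 ⊗[K] U0), a0p (u * v) w = a0p u (a0p v w)) ∧
    -- (u₀v₀)w₋₁ = u₀(v₀w₋₁)
    (∀ (u v : U0) (w : Gm ⊗[K] U0), a0m (u * v) w = a0m u (a0m v w)) ∧
    -- (u₀v₁)w₀ = u₀(v₁w₀)
    (∀ (u : U0) (v : G1 ⊗[K] U0) (w : U0), rmul (a0p u v) w = a0p u (rmul v w)) ∧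
    -- (u₀v₋₁)w₀ = u₀(v₋₁w₀)
    (∀ (u : U0) (v : Gm ⊗[K] U0) (w : U0), rmul (a0m u v) w = a0m u (rmul v w)) ∧
    -- (u₀v₁)w₋₁ = u₀(v₁w₋₁)
    (∀ (u : U0) (v : G1 ⊗[K] U0) (w : Gm ⊗[K] U0), mpm (a0p u v) w = u * mpm v w) ∧
    -- (u₀v₋₁)w₁ = u₀(v₋₁w₁)
    (∀ (u : U0) (v : Gm ⊗[K] U0) (w : G1 ⊗[K] U0), mmp (a0m u v) w = u * mmp v w) ∧
    -- (u₁v₋₁)w₀ = u₁(v₋₁w₀)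
    (∀ (u : G1 ⊗[K] U0) (v : Gm ⊗[K] U0) (w : U0), mpm u v * w = mpm u (rmul v w)) ∧
    -- (u₋₁v₁)w₀ = u₋₁(v₁w₀)
    (∀ (u : Gm ⊗[K] U0) (v : G1 ⊗[K] U0) (w : U0), mmp u v * w = mmp u (rmul v w)) ∧
    -- (u₁v₀)w₋₁ = u₁(v₀w₋₁)
    (∀ (u : G1 ⊗[K] U0) (v : U0) (w : Gm ⊗[K] U0), mpm (rmul u v) w = mpm u (a0m v w)) ∧
    -- (u₋₁v₀)w₁ = u₋₁(v₀w₁)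
    (∀ (u : Gm ⊗[K] U0) (v : U0) (w : G1 ⊗[K] U0), mmp (rmul u v) w = mmp u (a0p v w)) := by
  have hg := hyp.g_graded
  have hgen := hyp.g_gen
  exact ⟨mul_assoc, rmul_rmul, rmul_rmul,
    act_mul hg hgen hyp.a0p_one hyp.ii_0p,
    act_mul hg hgen hyp.a0m_one hyp.ii_0m,
    rmul_act hg hgen hyp.a0p_one hyp.ii_0p,
    rmul_act hg hgen hyp.a0m_one hyp.ii_0m,
    pairing_act_left hg hgen hyp.a0p_one hyp.ii_0p hyp.i_pm hyp.ii_pm hiii_pm,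
    pairing_act_left hg hgen hyp.a0m_one hyp.ii_0m hyp.i_mp hyp.ii_mp hiii_mp,
    pairing_mul_eq_pairing_rmul hg hgen hyp.i_pm hyp.ii_pm,
    pairing_mul_eq_pairing_rmul hg hgen hyp.i_mp hyp.ii_mp,
    pairing_rmul_left hg hgen hyp.a0m_one hyp.ii_0m hyp.ii_pm,
    pairing_rmul_left hg hgen hyp.a0p_one hyp.ii_0p hyp.ii_mp⟩

/-- Assuming additionally (iii):
`z(xy) = ⟦z,x⟧y + (−1)^{|z||x|} x⟦z,y⟧ + (−1)^{|z|(|x|+|y|)}(xy)z`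
for parity-homogeneous `z ∈ g`, `x ∈ G_{±1}`, `y ∈ G_{∓1}`, the collection
`U₋₁ = G₋₁ ⊗ U₀`, `U₀`, `U₁ = G₁ ⊗ U₀` with the given products is a focally associative
local superalgebra: the 13 focal associativity identities hold for all elements. -/
theorem focallyAssociative_of_contextHyps
    (K : Type*) [Field K] [CharZero K]
    (U0 : Type*) [Ring U0] [Algebra K U0]
    (p0 : ZMod 2 → Submodule K U0) [GradedAlgebra p0]
    (g : Submodule K U0)
    (G1 Gm : Type*) [AddCommGroup G1] [Module K G1] [AddCommGroup Gm] [Module K Gm]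
    (q1 : ZMod 2 → Submodule K G1) (qm : ZMod 2 → Submodule K Gm)
    [DirectSum.Decomposition q1] [DirectSum.Decomposition qm]
    (mpm : G1 ⊗[K] U0 →ₗ[K] Gm ⊗[K] U0 →ₗ[K] U0)
    (mmp : Gm ⊗[K] U0 →ₗ[K] G1 ⊗[K] U0 →ₗ[K] U0)
    (a0p : U0 →ₗ[K] G1 ⊗[K] U0 →ₗ[K] G1 ⊗[K] U0)
    (a0m : U0 →ₗ[K] Gm ⊗[K] U0 →ₗ[K] Gm ⊗[K] U0)
    (b1 : g →ₗ[K] G1 →ₗ[K] G1)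
    (bm : g →ₗ[K] Gm →ₗ[K] Gm)
    (hyp : ContextHyps K U0 p0 g G1 Gm q1 qm mpm mmp a0p a0m b1 bm)
    -- assumption (iii), case x ∈ G₁, y ∈ G₋₁:
    (hiii_pm : ∀ (t sx sy : ZMod 2) (z : g), (z : U0) ∈ p0 t →
      ∀ x : G1, x ∈ q1 sx → ∀ y : Gm, y ∈ qm sy →
      (z : U0) * mpm (x ⊗ₜ[K] 1) (y ⊗ₜ[K] 1)
        = mpm (b1 z x ⊗ₜ[K] 1) (y ⊗ₜ[K] 1)
          + ((-1 : K) ^ (t * sx).val) • mpm (x ⊗ₜ[K] 1) (bm z y ⊗ₜ[K] 1)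
          + ((-1 : K) ^ (t * (sx + sy)).val) • (mpm (x ⊗ₜ[K] 1) (y ⊗ₜ[K] 1) * (z : U0)))
    -- assumption (iii), case x ∈ G₋₁, y ∈ G₁:
    (hiii_mp : ∀ (t sx sy : ZMod 2) (z : g), (z : U0) ∈ p0 t →
      ∀ x : Gm, x ∈ qm sx → ∀ y : G1, y ∈ q1 sy →
      (z : U0) * mmp (x ⊗ₜ[K] 1) (y ⊗ₜ[K] 1)
        = mmp (bm z x ⊗ₜ[K] 1) (y ⊗ₜ[K] 1)
          + ((-1 : K) ^ (t * sx).val) • mmp (x ⊗ₜ[K] 1) (b1 z y ⊗ₜ[K] 1)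
          + ((-1 : K) ^ (t * (sx + sy)).val) • (mmp (x ⊗ₜ[K] 1) (y ⊗ₜ[K] 1) * (z : U0))) :
    -- (u₀v₀)w₀ = u₀(v₀w₀)
    (∀ u v w : U0, (u * v) * w = u * (v * w)) ∧
    -- (u₁v₀)w₀ = u₁(v₀w₀)
    (∀ (u : G1 ⊗[K] U0) (v w : U0), rmul (rmul u v) w = rmul u (v * w)) ∧
    -- (u₋₁v₀)w₀ = u₋₁(v₀w₀)
    (∀ (u : Gm ⊗[K] U0) (v w : U0), rmul (rmul u v) w = rmul u (v * w)) ∧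
    -- (u₀v₀)w₁ = u₀(v₀w₁)
    (∀ (u v : U0) (w : G1 ⊗[K] U0), a0p (u * v) w = a0p u (a0p v w)) ∧
    -- (u₀v₀)w₋₁ = u₀(v₀w₋₁)
    (∀ (u v : U0) (w : Gm ⊗[K] U0), a0m (u * v) w = a0m u (a0m v w)) ∧
    -- (u₀v₁)w₀ = u₀(v₁w₀)
    (∀ (u : U0) (v : G1 ⊗[K] U0) (w : U0), rmul (a0p u v) w = a0p u (rmul v w)) ∧
    -- (u₀v₋₁)w₀ = u₀(v₋₁w₀)
    (∀ (u : U0) (v : Gm ⊗[K] U0) (w : U0), rmul (a0m u v) w = a0m u (rmul v w)) ∧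
    -- (u₀v₁)w₋₁ = u₀(v₁w₋₁)
    (∀ (u : U0) (v : G1 ⊗[K] U0) (w : Gm ⊗[K] U0), mpm (a0p u v) w = u * mpm v w) ∧
    -- (u₀v₋₁)w₁ = u₀(v₋₁w₁)
    (∀ (u : U0) (v : Gm ⊗[K] U0) (w : G1 ⊗[K] U0), mmp (a0m u v) w = u * mmp v w) ∧
    -- (u₁v₋₁)w₀ = u₁(v₋₁w₀)
    (∀ (u : G1 ⊗[K] U0) (v : Gm ⊗[K] U0) (w : U0), mpm u v * w = mpm u (rmul v w)) ∧
    -- (u₋₁v₁)w₀ = u₋₁(v₁w₀)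
    (∀ (u : Gm ⊗[K] U0) (v : G1 ⊗[K] U0) (w : U0), mmp u v * w = mmp u (rmul v w)) ∧
    -- (u₁v₀)w₋₁ = u₁(v₀w₋₁)
    (∀ (u : G1 ⊗[K] U0) (v : U0) (w : Gm ⊗[K] U0), mpm (rmul u v) w = mpm u (a0m v w)) ∧
    -- (u₋₁v₀)w₁ = u₋₁(v₀w₁)
    (∀ (u : Gm ⊗[K] U0) (v : U0) (w : G1 ⊗[K] U0), mmp (rmul u v) w = mmp u (a0p v w)) :=
  focallyAssociative_of_contextHyps_general K U0 p0 g G1 Gm q1 qm mpm mmp a0p a0m b1 bm hyp hiii_pm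
    hiii_mp
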